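/- For all real λ and θ with |θ| < π, one has |(λ + iθ)/sinh(λ + iθ)| ≤ (θ/sin θ)·(λ/sinh λ), where the factors θ/sin θ and λ/sinh λ are interpreted as 1 when θ = 0 or λ = 0 respectively. -/

import Mathlib

open Real
open scoped Nat

lemma six_pow_fact_le (n : ℕ) : 6 ^ n * n ! ≤ (2 * n + 1)! := by
  induction n with
  | zero => simp
  | succ k ih =>
    have h2 : (2 * (k + 1) + 1)! = (2*k+3) * ((2*k+2) * (2*k+1)!) := by
      have h3 : 2 * (k+1) + 1 = ((2*k+1) + 1) + 1 := by ring
      rw [h3, Nat.factorial_succ, Nat.factorial_succ]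
    calc 6 ^ (k+1) * (k+1)! = 6 * (k+1) * (6^k * k !) := by
          rw [pow_succ, Nat.factorial_succ]; ring
      _ ≤ 6 * (k+1) * (2*k+1)! := Nat.mul_le_mul_left _ ih
      _ ≤ (2*k+3) * ((2*k+2) * (2*k+1)!) := by
          rw [← mul_assoc]
          exact Nat.mul_le_mul_right _ (by nlinarith)
      _ = (2 * (k + 1) + 1)! := h2.symm

lemma sinh_le_aux {x : ℝ} (hx : 0 ≤ x) : Real.sinh x ≤ x * Real.exp (x ^ 2 / 6) := by
  have h1 := Real.hasSum_sinh x
  have h2 : HasSum (fun n : ℕ => x * ((x ^ 2 / 6) ^ n / n !)) (x * Real.exp (x ^ 2 / 6)) := by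
    have := (NormedSpace.expSeries_div_hasSum_exp (x ^ 2 / 6)).mul_left x
    rwa [← Real.exp_eq_exp_ℝ] at this
  refine hasSum_le (fun n => ?_) h1 h2
  have heq : x * ((x ^ 2 / 6) ^ n / n !) = x ^ (2 * n + 1) / (6 ^ n * n !) := by
    rw [div_pow, ← pow_mul]
    field_simp
    ring
  rw [heq]
  have hfac : (6:ℝ) ^ n * n ! ≤ (2 * n + 1)! := by
    exact_mod_cast six_pow_fact_le n
  gcongr

lemma key1 (l : ℝ) : 3 * Real.sinh l ^ 2 ≤ l ^ 2 * Real.sinh l ^ 2 + 3 * l ^ 2 := by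
  -- reduce to l ≥ 0
  have main : ∀ x : ℝ, 0 ≤ x → 3 * Real.sinh x ^ 2 ≤ x ^ 2 * Real.sinh x ^ 2 + 3 * x ^ 2 := by
    intro x hx
    have h1 := sinh_le_aux hx
    have hs0 : 0 ≤ Real.sinh x := by rw [← Real.sinh_zero]; exact Real.sinh_le_sinh.mpr hx
    have hsq : Real.sinh x ^ 2 ≤ x ^ 2 * Real.exp (x ^ 2 / 3) := by
      have := mul_self_le_mul_self hs0 h1
      have he : Real.exp (x ^ 2 / 6) * Real.exp (x ^ 2 / 6) = Real.exp (x ^ 2 / 3) := by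
        rw [← Real.exp_add]; ring_nf
      nlinarith [this, he]
    rcases le_or_gt 3 (x ^ 2) with h3 | h3
    · nlinarith [sq_nonneg (Real.sinh x)]
    · have he2 : Real.exp (x ^ 2 / 3) * (1 - x ^ 2 / 3) ≤ 1 := by
        have hp : 0 < Real.exp (x ^ 2 / 3) := Real.exp_pos _
        have h4 : (1 - x ^ 2 / 3) ≤ Real.exp (-(x ^ 2 / 3)) := by
          linarith [Real.add_one_le_exp (-(x ^ 2 / 3))]
        have h5 := mul_le_mul_of_nonneg_left h4 hp.le
        rwa [← Real.exp_add, add_neg_cancel, Real.exp_zero] at h5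
      nlinarith [hsq, he2, Real.exp_pos (x ^ 2 / 3), sq_nonneg (Real.sinh x)]
  rcases le_total 0 l with h | h
  · exact main l h
  · have := main (-l) (by linarith)
    simpa [Real.sinh_neg, neg_pow] using this

lemma cos_ge_aux (x : ℝ) (hx : x ^ 2 ≤ 12) :
    1 - x ^ 2 / 2 + x ^ 4 / 24 - x ^ 6 / 720 ≤ Real.cos x := by
  have hev : ∀ m : ℕ, (0:ℝ) ≤ x ^ (2 * m) := fun m => by rw [pow_mul]; positivity
  set f : ℕ → ℝ := fun n => (-1) ^ n * x ^ (2 * n) / (2 * n)! with hf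
  have hc : HasSum f (Real.cos x) := Real.hasSum_cos x
  have htail : HasSum (fun n => f (n + 4)) (Real.cos x - ∑ i ∈ Finset.range 4, f i) :=
    ((hasSum_nat_add_iff' 4).mpr hc)
  have hcosh : Summable (fun m : ℕ => |x| ^ (2 * m) / (2 * m)!) := (Real.hasSum_cosh |x|).summable
  have hsumu : Summable (fun n : ℕ => x ^ (4 * n + 8) / (4 * n + 8)!) := by
    have hi : Function.Injective (fun n : ℕ => 2 * n + 4) := by
      intro a b h; dsimp only at h; omega
    have := hcosh.comp_injective hi
    refine this.congr fun n => ?_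
    simp only [Function.comp]
    have h1 : 2 * (2 * n + 4) = 4 * n + 8 := by ring
    have h2 : (0:ℝ) ≤ x ^ (4 * n + 8) := by rw [← h1]; exact hev _
    rw [h1, pow_abs, abs_of_nonneg h2]
  have hsumv : Summable (fun n : ℕ => x ^ (4 * n + 10) / (4 * n + 10)!) := by
    have hi : Function.Injective (fun n : ℕ => 2 * n + 5) := by
      intro a b h; dsimp only at h; omega
    have := hcosh.comp_injective hi
    refine this.congr fun n => ?_
    simp only [Function.comp]
    have h1 : 2 * (2 * n + 5) = 4 * n + 10 := by ring
    have h2 : (0:ℝ) ≤ x ^ (4 * n + 10) := by rw [← h1]; exact hev _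
    rw [h1, pow_abs, abs_of_nonneg h2]
  have heven : HasSum (fun n => f (2 * n + 4)) (∑' n : ℕ, x ^ (4 * n + 8) / (4 * n + 8)!) := by
    refine (hsumu.hasSum).congr_fun fun n => ?_
    simp only [hf]
    rw [show 2 * (2 * n + 4) = 4 * n + 8 by ring,
      show ((-1:ℝ)) ^ (2 * n + 4) = 1 by
        rw [show 2 * n + 4 = 2 * (n + 2) by ring, pow_mul, neg_one_sq, one_pow],
      one_mul]
  have hodd : HasSum (fun n => f (2 * n + 5)) (-(∑' n : ℕ, x ^ (4 * n + 10) / (4 * n + 10)!)) := by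
    refine (hsumv.hasSum.neg).congr_fun fun n => ?_
    simp only [hf]
    rw [show 2 * (2 * n + 5) = 4 * n + 10 by ring,
      show ((-1:ℝ)) ^ (2 * n + 5) = -1 by
        rw [show 2 * n + 5 = 2 * (n + 2) + 1 by ring, pow_succ, pow_mul, neg_one_sq, one_pow,
          one_mul]]
    ring
  have hcomb : HasSum (fun n => f (n + 4))
      ((∑' n : ℕ, x ^ (4 * n + 8) / (4 * n + 8)!) - ∑' n : ℕ, x ^ (4 * n + 10) / (4 * n + 10)!) := by
    have := HasSum.even_add_odd (f := fun n => f (n + 4))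
      (heven.congr_fun fun n => by ring_nf) (hodd.congr_fun fun n => by ring_nf)
    simpa [sub_eq_add_neg] using this
  have hVU : (∑' n : ℕ, x ^ (4 * n + 10) / (4 * n + 10)!) ≤ ∑' n : ℕ, x ^ (4 * n + 8) / (4 * n + 8)! := by
    refine Summable.tsum_le_tsum (fun n => ?_) hsumv hsumu
    have hfac : ((4 * n + 10)! : ℝ) = ((4 * n + 10) * (4 * n + 9)) * (4 * n + 8)! := by
      rw [show 4*n+10 = ((4*n+8)+1)+1 by ring, Nat.factorial_succ, Nat.factorial_succ]
      push_cast; ring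
    rw [hfac, show 4 * n + 10 = (4 * n + 8) + 2 by ring, pow_add]
    have h8 : (0:ℝ) ≤ x ^ (4 * n + 8) := by
      rw [show 4*n+8 = 2*(2*n+4) by ring]; exact hev _
    have hfle : (0:ℝ) < ((4 * n + 8)! : ℝ) := by positivity
    rw [div_le_div_iff₀ (by positivity) (by positivity)]
    have hb : (0:ℝ) ≤ x ^ (4 * n + 8) * ((4 * n + 8)! : ℝ) := mul_nonneg h8 hfle.le
    have h12 : x ^ 2 ≤ ((4 * n + 10) : ℝ) * ((4 * n + 9) : ℝ) := by
      have hn : (0:ℝ) ≤ (n:ℝ) := Nat.cast_nonneg n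
      nlinarith
    nlinarith [mul_le_mul_of_nonneg_left h12 hb]
  have h0 : 0 ≤ Real.cos x - ∑ i ∈ Finset.range 4, f i := by
    rw [htail.unique hcomb]; linarith
  have hS : ∑ i ∈ Finset.range 4, f i = 1 - x ^ 2 / 2 + x ^ 4 / 24 - x ^ 6 / 720 := by
    simp [hf, Finset.sum_range_succ]
    norm_num [Nat.factorial]
    ring
  linarith [h0, hS.le, hS.ge]

lemma key2 (θ : ℝ) : 3 * Real.sin θ ^ 2 + θ ^ 2 * Real.sin θ ^ 2 ≤ 3 * θ ^ 2 := by
  rcases le_or_gt (θ ^ 2) (3 / 2) with h | h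
  · have hc := cos_ge_aux (2 * θ) (by nlinarith)
    have hdouble : Real.cos (2 * θ) = 1 - 2 * Real.sin θ ^ 2 := by rw [Real.cos_two_mul' θ, Real.cos_sq']; ring
    nlinarith [sq_nonneg θ, sq_nonneg (θ^2), sq_nonneg (θ^3), sq_nonneg (Real.sin θ)]
  · nlinarith [Real.sin_sq_le_one θ, sq_nonneg θ]

lemma abs_sinh_eq (l θ : ℝ) :
    ‖Complex.sinh ((l : ℂ) + θ * Complex.I)‖ =
      Real.sqrt (Real.sinh l ^ 2 + Real.sin θ ^ 2) := by
  have h1 : Complex.sinh ((l : ℂ) + θ * Complex.I) =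
      ((Real.sinh l * Real.cos θ : ℝ) : ℂ) + ((Real.cosh l * Real.sin θ : ℝ) : ℂ) * Complex.I := by
    rw [Complex.sinh_add, Complex.sinh_mul_I, Complex.cosh_mul_I]
    push_cast
    ring
  rw [h1, Complex.norm_add_mul_I]
  congr 1
  have := Real.sin_sq_add_cos_sq θ
  have := Real.cosh_sq l
  nlinarith [this]

lemma div_sinh_pos {x : ℝ} (hx : x ≠ 0) : 0 < x / Real.sinh x := by
  rcases hx.lt_or_gt with h | h
  · exact div_pos_of_neg_of_neg h (by simpa [Real.sinh_neg_iff] using h)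
  · exact div_pos h (by simpa [Real.sinh_pos_iff] using h)

lemma div_sin_pos {θ : ℝ} (hθ : |θ| < π) (ht : θ ≠ 0) : 0 < θ / Real.sin θ := by
  rcases ht.lt_or_gt with h | h
  · have h1 : 0 < Real.sin (-θ) :=
      Real.sin_pos_of_pos_of_lt_pi (by linarith) (by rw [abs_of_neg h] at hθ; linarith)
    rw [Real.sin_neg] at h1
    exact div_pos_of_neg_of_neg h (by linarith)
  · exact div_pos h (Real.sin_pos_of_pos_of_lt_pi h (by rw [abs_of_pos h] at hθ; linarith))

/-- For real `λ, θ` with `|θ| < π`,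
`|(λ+iθ)/sinh(λ+iθ)| ≤ (θ/sin θ)·(λ/sinh λ)`, the factors being interpreted as `1`
at `θ = 0`, `λ = 0` (and the left-hand side as its limit `1` when `λ = θ = 0`). -/
theorem abs_div_sinh_le (l θ : ℝ) (hθ : |θ| < π) :
    (if l = 0 ∧ θ = 0 then 1 else
        ‖((l : ℂ) + θ * Complex.I) / Complex.sinh ((l : ℂ) + θ * Complex.I)‖) ≤
      (if θ = 0 then 1 else θ / Real.sin θ) * (if l = 0 then 1 else l / Real.sinh l) := by
  by_cases h0 : l = 0 ∧ θ = 0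
  · rw [if_pos h0, if_pos h0.2, if_pos h0.1]; norm_num
  · rw [if_neg h0]
    have habs : ‖((l : ℂ) + θ * Complex.I) / Complex.sinh ((l : ℂ) + θ * Complex.I)‖
        = Real.sqrt (l ^ 2 + θ ^ 2) / Real.sqrt (Real.sinh l ^ 2 + Real.sin θ ^ 2) := by
      rw [norm_div, abs_sinh_eq, Complex.norm_add_mul_I]
    rw [habs]
    by_cases ht : θ = 0
    · have hl : l ≠ 0 := fun h => h0 ⟨h, ht⟩
      subst ht
      rw [if_neg hl, if_pos rfl, one_mul]
      simp only [Real.sin_zero, ne_eq, zero_pow, add_zero, OfNat.ofNat_ne_zero,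
        not_false_eq_true]
      rw [Real.sqrt_sq_eq_abs, Real.sqrt_sq_eq_abs, ← abs_div,
        abs_of_pos (div_sinh_pos hl)]
    · rw [if_neg ht]
      by_cases hl : l = 0
      · subst hl
        rw [if_pos rfl, mul_one]
        simp only [Real.sinh_zero, ne_eq, zero_pow, zero_add, OfNat.ofNat_ne_zero,
          not_false_eq_true]
        rw [Real.sqrt_sq_eq_abs, Real.sqrt_sq_eq_abs, ← abs_div,
          abs_of_pos (div_sin_pos hθ ht)]
      · rw [if_neg hl]
        have hsh : Real.sinh l ≠ 0 := fun h => hl (by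
          have := Real.sinh_pos_iff (x := l); have := Real.sinh_neg_iff (x := l)
          rcases lt_trichotomy l 0 with h' | h' | h'
          · exact absurd h (by simp [Real.sinh_neg_iff.mpr h'] at *; linarith [Real.sinh_neg_iff.mpr h'])
          · exact h'
          · linarith [Real.sinh_pos_iff.mpr h'])
        have hs : Real.sin θ ≠ 0 := by
          intro h
          have := div_sin_pos hθ ht
          rw [h, div_zero] at this; exact lt_irrefl 0 this
        have hR : 0 < θ / Real.sin θ * (l / Real.sinh l) :=
          mul_pos (div_sin_pos hθ ht) (div_sinh_pos hl)
        have hs2 : 0 < Real.sin θ ^ 2 := lt_of_le_of_ne (sq_nonneg _) (Ne.symm (pow_ne_zero 2 hs))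
        have hh2 : 0 < Real.sinh l ^ 2 := lt_of_le_of_ne (sq_nonneg _) (Ne.symm (pow_ne_zero 2 hsh))
        have hBpos : 0 < Real.sqrt (Real.sinh l ^ 2 + Real.sin θ ^ 2) :=
          Real.sqrt_pos.mpr (by linarith)
        rw [div_le_iff₀ hBpos]
        have hkey : (l ^ 2 + θ ^ 2) * (Real.sin θ ^ 2 * Real.sinh l ^ 2)
            ≤ θ ^ 2 * l ^ 2 * (Real.sinh l ^ 2 + Real.sin θ ^ 2) := by
          nlinarith [mul_le_mul_of_nonneg_left (key1 l)
              (mul_nonneg (sq_nonneg θ) (sq_nonneg (Real.sin θ))),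
            mul_le_mul_of_nonneg_left (key2 θ)
              (mul_nonneg (sq_nonneg l) (sq_nonneg (Real.sinh l)))]
        have h1 : l ^ 2 + θ ^ 2 ≤
            (θ / Real.sin θ * (l / Real.sinh l) * Real.sqrt (Real.sinh l ^ 2 + Real.sin θ ^ 2)) ^ 2 := by
          rw [mul_pow, Real.sq_sqrt (by positivity), mul_pow, div_pow, div_pow,
            div_mul_div_comm, div_mul_eq_mul_div, le_div_iff₀ (by positivity)]
          nlinarith [hkey]
        calc Real.sqrt (l ^ 2 + θ ^ 2)
            ≤ Real.sqrt ((θ / Real.sin θ * (l / Real.sinh l) *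
                Real.sqrt (Real.sinh l ^ 2 + Real.sin θ ^ 2)) ^ 2) := Real.sqrt_le_sqrt h1
          _ = _ := Real.sqrt_sq (mul_nonneg hR.le hBpos.le)
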